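/- Let (V,g) be an n-dimensional (n ≥ 4) real vector space with a nondegenerate symmetric bilinear form g, let B be a generalized curvature tensor on V, A a symmetric bilinear form, and suppose T = α₁·B + (α₂/2)·A∧A + α₃·g∧A + α₄·g∧A² + (α₅/2)·g∧g for real numbers α₁,…,α₅. Then Weyl(T) = α₁·Weyl(B) + (α₂/(n−2))·E(A), where for a generalized curvature tensor T, Weyl(T) = T − (1/(n−2))·g∧Ric(T) + (κ(T)/(2(n−2)(n−1)))·g∧g, and E(A) = g∧A² + ((n−2)/2)·A∧A − tr(A)·g∧A + ((tr(A)²−tr(A²))/(2(n−1)))·g∧g. -/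

import Mathlib

variable {V : Type*} [AddCommGroup V] [Module ℝ V]

/-- Kulkarni–Nomizu product of two (0,2)-tensors. -/
def kn (A B : V → V → ℝ) : V → V → V → V → ℝ := fun x1 x2 x3 x4 =>
  A x1 x4 * B x2 x3 + A x2 x3 * B x1 x4 - A x1 x3 * B x2 x4 - A x2 x4 * B x1 x3

/-- The endomorphism `(X ∧_A Y)Z = A(Y,Z)X − A(X,Z)Y`. -/
def wedgeV (A : V → V → ℝ) (x y z : V) : V := A y z • x - A x z • y

/-- Tachibana tensor `Q(A,T)` of a (0,2)-tensor `A` and a (0,4)-tensor `T`. -/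
def Q4 (A : V → V → ℝ) (T : V → V → V → V → ℝ) : V → V → V → V → V → V → ℝ :=
  fun x1 x2 x3 x4 x y =>
    -(T (wedgeV A x y x1) x2 x3 x4) - T x1 (wedgeV A x y x2) x3 x4
      - T x1 x2 (wedgeV A x y x3) x4 - T x1 x2 x3 (wedgeV A x y x4)

/-- A generalized curvature tensor: skew in the first and last pairs, symmetric under
pair interchange, and satisfying the first Bianchi identity. -/
def IsGenCurv (R : V → V → V → V → ℝ) : Prop :=
  (∀ x₁ x₂ x₃ x₄, R x₂ x₁ x₃ x₄ = - R x₁ x₂ x₃ x₄) ∧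
  (∀ x₁ x₂ x₃ x₄, R x₁ x₂ x₄ x₃ = - R x₁ x₂ x₃ x₄) ∧
  (∀ x₁ x₂ x₃ x₄, R x₁ x₂ x₃ x₄ = R x₃ x₄ x₁ x₂) ∧
  (∀ x₁ x₂ x₃ x₄, R x₁ x₂ x₃ x₄ + R x₂ x₃ x₁ x₄ + R x₃ x₁ x₂ x₄ = 0)

/-! With respect to a `g`-orthonormal basis `eᵢ` of signs `εᵢ`, the coordinates of `x` are
`εᵢ g(x, eᵢ)`, so contracting with `∑ εᵢ (·)(eᵢ)(eᵢ)` computes traces. In particular the Ricci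
contraction of `g(s·,·) ∧ g(t·,·)` is `tr s · g(t·,·) + tr t · g(s·,·) - g(st·,·) - g(ts·,·)`.
This expresses `Ric(T)` and `κ(T)` through `Ric(B)`, `κ(B)`, the forms `g`, `A`, `A²` and the
traces of `a`, `a²`; substituted into `Weyl(T)`, the multiples of `g ∧ A`, `g ∧ A²` and `g ∧ g`
cancel, since the Weyl part of any `g ∧ h` vanishes. -/

section Contraction

variable {ι : Type*} [Fintype ι] [DecidableEq ι]

noncomputable def ricci (e : Module.Basis ι ℝ V) (ε : ι → ℝ) (T : V → V → V → V → ℝ)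
    (x y : V) : ℝ :=
  ∑ i, ε i * T (e i) x y (e i)

noncomputable def metricTrace (e : Module.Basis ι ℝ V) (ε : ι → ℝ) (h : V → V → ℝ) : ℝ :=
  ∑ i, ε i * h (e i) (e i)

theorem trace_id_eq_card (e : Module.Basis ι ℝ V) :
    LinearMap.trace ℝ V LinearMap.id = Fintype.card ι := by
  simp [LinearMap.trace_eq_matrix_trace ℝ e]

variable {g : V →ₗ[ℝ] V →ₗ[ℝ] ℝ} {e : Module.Basis ι ℝ V} {ε : ι → ℝ}
  (hε : ∀ i, ε i = 1 ∨ ε i = -1)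
  (horth : ∀ i j, g (e i) (e j) = if i = j then ε i else 0)
include hε horth

theorem repr_eq_sign_mul (x : V) (j : ι) : e.repr x j = ε j * g x (e j) := by
  have hgx : g x (e j) = e.repr x j * ε j := by
    conv_lhs => rw [← e.sum_repr x]
    simp only [map_sum, map_smul, LinearMap.sum_apply, LinearMap.smul_apply, horth, smul_eq_mul,
      mul_ite, mul_zero, Finset.sum_ite_eq', Finset.mem_univ, if_true]
  rw [hgx, ← mul_assoc, mul_comm, ← mul_assoc]
  rcases hε j with h | h <;> simp [h]

theorem sum_sign_mul_apply (f : V →ₗ[ℝ] ℝ) (x : V) :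
    ∑ i, ε i * g x (e i) * f (e i) = f x := by
  conv_rhs => rw [← e.sum_repr x]
  simp [repr_eq_sign_mul hε horth]

theorem metricTrace_comp (s : V →ₗ[ℝ] V) :
    metricTrace e ε (fun u v => g (s u) v) = LinearMap.trace ℝ V s := by
  simp [LinearMap.trace_eq_matrix_trace ℝ e, Matrix.trace, LinearMap.toMatrix_apply,
    repr_eq_sign_mul hε horth, metricTrace]

theorem ricci_kn_comp (s t : V →ₗ[ℝ] V) (x y : V) :
    ricci e ε (kn (fun u v => g (s u) v) (fun u v => g (t u) v)) x y
      = LinearMap.trace ℝ V s * g (t x) y + LinearMap.trace ℝ V t * g (s x) y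
        - g (s (t x)) y - g (t (s x)) y := by
  have hst := sum_sign_mul_apply hε horth ((g ∘ₗ s).flip y) (t x)
  have hts := sum_sign_mul_apply hε horth ((g ∘ₗ t).flip y) (s x)
  simp only [LinearMap.flip_apply, LinearMap.comp_apply] at hst hts
  rw [← metricTrace_comp hε horth s, ← metricTrace_comp hε horth t, ← hst, ← hts]
  simp only [ricci, metricTrace, kn, Finset.sum_mul, ← Finset.sum_add_distrib,
    ← Finset.sum_sub_distrib]
  exact Finset.sum_congr rfl fun i _ => by ring

variable {a : V →ₗ[ℝ] V} {B T : V → V → V → V → ℝ} {α₁ α₂ α₃ α₄ α₅ : ℝ}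
  (hT : ∀ x₁ x₂ x₃ x₄ : V,
      T x₁ x₂ x₃ x₄
        = α₁ * B x₁ x₂ x₃ x₄
          + (α₂ / 2) * kn (fun u v => g (a u) v) (fun u v => g (a u) v) x₁ x₂ x₃ x₄
          + α₃ * kn (fun u v => g u v) (fun u v => g (a u) v) x₁ x₂ x₃ x₄
          + α₄ * kn (fun u v => g u v) (fun u v => g (a (a u)) v) x₁ x₂ x₃ x₄
          + (α₅ / 2) * kn (fun u v => g u v) (fun u v => g u v) x₁ x₂ x₃ x₄)
include hT

theorem ricci_eq_of_eq_kn (x y : V) :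
    ricci e ε T x y
      = α₁ * ricci e ε B x y
        + α₂ * (LinearMap.trace ℝ V a * g (a x) y - g (a (a x)) y)
        + α₃ * ((Fintype.card ι - 2) * g (a x) y + LinearMap.trace ℝ V a * g x y)
        + α₄ * ((Fintype.card ι - 2) * g (a (a x)) y + LinearMap.trace ℝ V (a ∘ₗ a) * g x y)
        + α₅ * ((Fintype.card ι - 1) * g x y) := by
  have hAA := ricci_kn_comp hε horth a a x y
  have hgA := ricci_kn_comp hε horth LinearMap.id a x y
  have hgAA := ricci_kn_comp hε horth LinearMap.id (a ∘ₗ a) x y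
  have hgg := ricci_kn_comp hε horth LinearMap.id LinearMap.id x y
  simp only [LinearMap.id_apply, LinearMap.comp_apply, trace_id_eq_card e] at hgA hgAA hgg
  have hlin : ricci e ε T x y
      = α₁ * ricci e ε B x y
        + (α₂ / 2) * ricci e ε (kn (fun u v => g (a u) v) (fun u v => g (a u) v)) x y
        + α₃ * ricci e ε (kn (fun u v => g u v) (fun u v => g (a u) v)) x y
        + α₄ * ricci e ε (kn (fun u v => g u v) (fun u v => g (a (a u)) v)) x y
        + (α₅ / 2) * ricci e ε (kn (fun u v => g u v) (fun u v => g u v)) x y := by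
    simp only [ricci, hT, Finset.mul_sum, ← Finset.sum_add_distrib]
    exact Finset.sum_congr rfl fun i _ => by ring
  rw [hlin, hAA, hgA, hgAA, hgg]
  ring

theorem metricTrace_ricci_eq_of_eq_kn :
    metricTrace e ε (ricci e ε T)
      = α₁ * metricTrace e ε (ricci e ε B)
        + α₂ * (LinearMap.trace ℝ V a ^ 2 - LinearMap.trace ℝ V (a ∘ₗ a))
        + α₃ * (2 * (Fintype.card ι - 1) * LinearMap.trace ℝ V a)
        + α₄ * (2 * (Fintype.card ι - 1) * LinearMap.trace ℝ V (a ∘ₗ a))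
        + α₅ * (Fintype.card ι * (Fintype.card ι - 1)) := by
  have hA := metricTrace_comp hε horth a
  have hAA := metricTrace_comp hε horth (a ∘ₗ a)
  have hg := metricTrace_comp hε horth LinearMap.id
  simp only [LinearMap.id_apply, LinearMap.comp_apply, trace_id_eq_card e] at hAA hg
  have hlin : metricTrace e ε (ricci e ε T)
      = α₁ * metricTrace e ε (ricci e ε B)
        + (α₂ * LinearMap.trace ℝ V a + α₃ * (Fintype.card ι - 2))
          * metricTrace e ε (fun u v => g (a u) v)
        + (α₄ * (Fintype.card ι - 2) - α₂) * metricTrace e ε (fun u v => g (a (a u)) v)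
        + (α₃ * LinearMap.trace ℝ V a + α₄ * LinearMap.trace ℝ V (a ∘ₗ a)
            + α₅ * (Fintype.card ι - 1)) * metricTrace e ε (fun u v => g u v) := by
    simp only [metricTrace, ricci_eq_of_eq_kn hε horth hT, Finset.mul_sum,
      ← Finset.sum_add_distrib]
    exact Finset.sum_congr rfl fun i _ => by ring
  rw [hlin, hA, hAA, hg]
  ring

end Contraction

theorem stmt_14_general {V : Type*} [AddCommGroup V] [Module ℝ V]
    (n : ℕ) (hn4 : 4 ≤ n)
    (g A : V →ₗ[ℝ] V →ₗ[ℝ] ℝ)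
    (a : V →ₗ[ℝ] V) (ha : ∀ x y, g (a x) y = A x y)
    (e : Module.Basis (Fin n) ℝ V) (ε : Fin n → ℝ) (hε : ∀ i, ε i = 1 ∨ ε i = -1)
    (horth : ∀ i j, g (e i) (e j) = if i = j then ε i else 0)
    (B T : V → V → V → V → ℝ)
    (RicB RicT : V → V → ℝ)
    (hRicB : ∀ x y, RicB x y = ∑ i, ε i * B (e i) x y (e i))
    (hRicT : ∀ x y, RicT x y = ∑ i, ε i * T (e i) x y (e i))
    (α₁ α₂ α₃ α₄ α₅ : ℝ)
    (hT : ∀ x₁ x₂ x₃ x₄ : V,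
      T x₁ x₂ x₃ x₄
        = α₁ * B x₁ x₂ x₃ x₄
          + (α₂ / 2) * kn (fun u v => A u v) (fun u v => A u v) x₁ x₂ x₃ x₄
          + α₃ * kn (fun u v => g u v) (fun u v => A u v) x₁ x₂ x₃ x₄
          + α₄ * kn (fun u v => g u v) (fun u v => A (a u) v) x₁ x₂ x₃ x₄
          + (α₅ / 2) * kn (fun u v => g u v) (fun u v => g u v) x₁ x₂ x₃ x₄) :
    ∀ x₁ x₂ x₃ x₄ : V,
      T x₁ x₂ x₃ x₄
          - (1 / ((n : ℝ) - 2)) * kn (fun u v => g u v) RicT x₁ x₂ x₃ x₄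
          + ((∑ i, ε i * RicT (e i) (e i)) / (2 * ((n : ℝ) - 2) * ((n : ℝ) - 1)))
              * kn (fun u v => g u v) (fun u v => g u v) x₁ x₂ x₃ x₄
        = α₁ * (B x₁ x₂ x₃ x₄
              - (1 / ((n : ℝ) - 2)) * kn (fun u v => g u v) RicB x₁ x₂ x₃ x₄
              + ((∑ i, ε i * RicB (e i) (e i)) / (2 * ((n : ℝ) - 2) * ((n : ℝ) - 1)))
                  * kn (fun u v => g u v) (fun u v => g u v) x₁ x₂ x₃ x₄)
          + (α₂ / ((n : ℝ) - 2))
              * (kn (fun u v => g u v) (fun u v => A (a u) v) x₁ x₂ x₃ x₄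
                  + (((n : ℝ) - 2) / 2) * kn (fun u v => A u v) (fun u v => A u v) x₁ x₂ x₃ x₄
                  - LinearMap.trace ℝ V a * kn (fun u v => g u v) (fun u v => A u v) x₁ x₂ x₃ x₄
                  + (((LinearMap.trace ℝ V a) ^ 2 - LinearMap.trace ℝ V (a ∘ₗ a))
                        / (2 * ((n : ℝ) - 1)))
                      * kn (fun u v => g u v) (fun u v => g u v) x₁ x₂ x₃ x₄) := by
  obtain rfl : RicT = ricci e ε T := funext₂ hRicT
  obtain rfl : RicB = ricci e ε B := funext₂ hRicB
  have hTg := hT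
  simp only [← ha] at hTg
  have hRic : ∀ x y, ricci e ε T x y
      = α₁ * ricci e ε B x y + α₂ * (LinearMap.trace ℝ V a * A x y - A (a x) y)
        + α₃ * ((n - 2) * A x y + LinearMap.trace ℝ V a * g x y)
        + α₄ * ((n - 2) * A (a x) y + LinearMap.trace ℝ V (a ∘ₗ a) * g x y)
        + α₅ * ((n - 1) * g x y) := fun x y => by
    simpa only [ha, Fintype.card_fin] using ricci_eq_of_eq_kn hε horth hTg x y
  have hScal : ∑ i, ε i * ricci e ε T (e i) (e i)
      = α₁ * ∑ i, ε i * ricci e ε B (e i) (e i)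
        + α₂ * (LinearMap.trace ℝ V a ^ 2 - LinearMap.trace ℝ V (a ∘ₗ a))
        + α₃ * (2 * (n - 1) * LinearMap.trace ℝ V a)
        + α₄ * (2 * (n - 1) * LinearMap.trace ℝ V (a ∘ₗ a))
        + α₅ * (n * (n - 1)) := by
    have h := metricTrace_ricci_eq_of_eq_kn hε horth hTg
    rw [Fintype.card_fin] at h
    exact h
  have hn : (4 : ℝ) ≤ n := by exact_mod_cast hn4
  have hn2 : (n : ℝ) - 2 ≠ 0 := by linarith
  have hn1 : (n : ℝ) - 1 ≠ 0 := by linarith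
  intro x₁ x₂ x₃ x₄
  rw [hScal, hT x₁ x₂ x₃ x₄]
  simp only [kn, hRic]
  field_simp
  ring

/-- if `T = α₁·B + (α₂/2)·A∧A + α₃·g∧A + α₄·g∧A² + (α₅/2)·g∧g`,
then `Weyl(T) = α₁·Weyl(B) + (α₂/(n−2))·E(A)`. -/
theorem stmt_14 {V : Type*} [AddCommGroup V] [Module ℝ V] [FiniteDimensional ℝ V]
    (n : ℕ) (hn4 : 4 ≤ n) (hdim : Module.finrank ℝ V = n)
    (g A : V →ₗ[ℝ] V →ₗ[ℝ] ℝ)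
    (hg : ∀ x y, g x y = g y x)
    (hgnd : ∀ x : V, (∀ y : V, g x y = 0) → x = 0)
    (hA : ∀ x y, A x y = A y x)
    (a : V →ₗ[ℝ] V) (ha : ∀ x y, g (a x) y = A x y)
    (e : Module.Basis (Fin n) ℝ V) (ε : Fin n → ℝ) (hε : ∀ i, ε i = 1 ∨ ε i = -1)
    (horth : ∀ i j, g (e i) (e j) = if i = j then ε i else 0)
    (B T : V → V → V → V → ℝ) (hBcurv : IsGenCurv B) (hTcurv : IsGenCurv T)
    (RicB RicT : V → V → ℝ)
    (hRicB : ∀ x y, RicB x y = ∑ i, ε i * B (e i) x y (e i))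
    (hRicT : ∀ x y, RicT x y = ∑ i, ε i * T (e i) x y (e i))
    (α₁ α₂ α₃ α₄ α₅ : ℝ)
    (hT : ∀ x₁ x₂ x₃ x₄ : V,
      T x₁ x₂ x₃ x₄
        = α₁ * B x₁ x₂ x₃ x₄
          + (α₂ / 2) * kn (fun u v => A u v) (fun u v => A u v) x₁ x₂ x₃ x₄
          + α₃ * kn (fun u v => g u v) (fun u v => A u v) x₁ x₂ x₃ x₄
          + α₄ * kn (fun u v => g u v) (fun u v => A (a u) v) x₁ x₂ x₃ x₄
          + (α₅ / 2) * kn (fun u v => g u v) (fun u v => g u v) x₁ x₂ x₃ x₄) :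
    ∀ x₁ x₂ x₃ x₄ : V,
      T x₁ x₂ x₃ x₄
          - (1 / ((n : ℝ) - 2)) * kn (fun u v => g u v) RicT x₁ x₂ x₃ x₄
          + ((∑ i, ε i * RicT (e i) (e i)) / (2 * ((n : ℝ) - 2) * ((n : ℝ) - 1)))
              * kn (fun u v => g u v) (fun u v => g u v) x₁ x₂ x₃ x₄
        = α₁ * (B x₁ x₂ x₃ x₄
              - (1 / ((n : ℝ) - 2)) * kn (fun u v => g u v) RicB x₁ x₂ x₃ x₄
              + ((∑ i, ε i * RicB (e i) (e i)) / (2 * ((n : ℝ) - 2) * ((n : ℝ) - 1)))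
                  * kn (fun u v => g u v) (fun u v => g u v) x₁ x₂ x₃ x₄)
          + (α₂ / ((n : ℝ) - 2))
              * (kn (fun u v => g u v) (fun u v => A (a u) v) x₁ x₂ x₃ x₄
                  + (((n : ℝ) - 2) / 2) * kn (fun u v => A u v) (fun u v => A u v) x₁ x₂ x₃ x₄
                  - LinearMap.trace ℝ V a * kn (fun u v => g u v) (fun u v => A u v) x₁ x₂ x₃ x₄
                  + (((LinearMap.trace ℝ V a) ^ 2 - LinearMap.trace ℝ V (a ∘ₗ a))
                        / (2 * ((n : ℝ) - 1)))
                      * kn (fun u v => g u v) (fun u v => g u v) x₁ x₂ x₃ x₄) :=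
  stmt_14_general n hn4 g A a ha e ε hε horth B T RicB RicT hRicB hRicT α₁ α₂ α₃ α₄ α₅ hT
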